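/- (GKST reduction.) Suppose there is a one-round, (1−η)-secure, 2-server private information retrieval scheme for n-bit databases with query size t, answer size ℓ, recovery probability 1/2 + ε, using b bits. Then there exist m ≤ 6·2^t and a map C : {0,1}^n → ({0,1}^ℓ)^m that is a (2, 3, ε−η)-smooth code using b bits. -/

import Mathlib

/-- A one-round 2-server private information retrieval scheme for `n`-bit databases
with query size `t` and answer size `ℓ`: a finite probability space `Fin R` with
weights `pr` (the user's randomness), query functions `q1, q2`, the two servers'
answer functions `ans1, ans2`, and the user's output functions `out`. -/
structure PIRScheme (n t ℓ : ℕ) where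
  R : ℕ
  pr : Fin R → ℝ
  q1 : Fin n → Fin R → Fin t → Bool
  q2 : Fin n → Fin R → Fin t → Bool
  ans1 : (Fin n → Bool) → (Fin t → Bool) → Fin ℓ → Bool
  ans2 : (Fin n → Bool) → (Fin t → Bool) → Fin ℓ → Bool
  out : Fin n → Fin R → (Fin ℓ → Bool) → (Fin ℓ → Bool) → Bool

/-- The user's randomness is a probability distribution. -/
def PIRScheme.ProbDist {n t ℓ : ℕ} (P : PIRScheme n t ℓ) : Prop :=
  (∀ r, 0 ≤ P.pr r) ∧ ∑ r, P.pr r = 1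

/-- Recovery probability at least `1/2 + ε`: for every database `x` and index `i`, the
user outputs `x_i` with probability at least `1/2 + ε`. -/
def PIRScheme.Correct {n t ℓ : ℕ} (P : PIRScheme n t ℓ) (ε : ℝ) : Prop :=
  ∀ (x : Fin n → Bool) (i : Fin n),
    1 / 2 + ε ≤
      ∑ r ∈ Finset.univ.filter
        (fun r => P.out i r (P.ans1 x (P.q1 i r)) (P.ans2 x (P.q2 i r)) = x i),
        P.pr r

/-- `(1-η)`-security: for each server, the distributions of the query induced by any
two indices `i1, i2` are within total variation distance `η`. -/
def PIRScheme.Secure {n t ℓ : ℕ} (P : PIRScheme n t ℓ) (η : ℝ) : Prop :=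
  ∀ i1 i2 : Fin n,
    (1 / 2) * ∑ q : Fin t → Bool,
      |(∑ r ∈ Finset.univ.filter (fun r => P.q1 i1 r = q), P.pr r) -
        (∑ r ∈ Finset.univ.filter (fun r => P.q1 i2 r = q), P.pr r)| ≤ η ∧
    (1 / 2) * ∑ q : Fin t → Bool,
      |(∑ r ∈ Finset.univ.filter (fun r => P.q2 i1 r = q), P.pr r) -
        (∑ r ∈ Finset.univ.filter (fun r => P.q2 i2 r = q), P.pr r)| ≤ η

/-- The scheme uses only `b` (predetermined, depending on `i` and `r`) bits of each of
the two `ℓ`-bit answers. -/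
def PIRScheme.UsesBits {n t ℓ : ℕ} (P : PIRScheme n t ℓ) (b : ℕ) : Prop :=
  ∀ (i : Fin n) (r : Fin P.R),
    ∃ S0 S1 : Finset (Fin ℓ), S0.card = b ∧ S1.card = b ∧
      ∀ a0 a1 a0' a1' : Fin ℓ → Bool,
        (∀ k ∈ S0, a0 k = a0' k) → (∀ k ∈ S1, a1 k = a1' k) →
          P.out i r a0 a1 = P.out i r a0' a1'

/-- A decoding tuple `(j0, j1, S0, S1, f)` for a 2-query decoder: two query positions,
two sets of answer bits, and an output function (taking the full `ℓ`-bit answers;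
the requirement that it only depends on the bits in `S0`/`S1` is `DecTuple.Valid`). -/
structure DecTuple (m ℓ : ℕ) where
  j0 : Fin m
  j1 : Fin m
  S0 : Finset (Fin ℓ)
  S1 : Finset (Fin ℓ)
  f : (Fin ℓ → Bool) → (Fin ℓ → Bool) → Bool
deriving DecidableEq

/-- Decoding tuples form a finite type. -/
def DecTuple.equivProd (m ℓ : ℕ) :
    (Fin m × Fin m × Finset (Fin ℓ) × Finset (Fin ℓ) ×
      ((Fin ℓ → Bool) → (Fin ℓ → Bool) → Bool)) ≃ DecTuple m ℓ where
  toFun p := ⟨p.1, p.2.1, p.2.2.1, p.2.2.2.1, p.2.2.2.2⟩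
  invFun ω := ⟨ω.j0, ω.j1, ω.S0, ω.S1, ω.f⟩
  left_inv _ := rfl
  right_inv _ := rfl

instance (m ℓ : ℕ) : Fintype (DecTuple m ℓ) :=
  Fintype.ofEquiv _ (DecTuple.equivProd m ℓ)

/-- A decoding tuple is valid for `b` used bits if the two queried positions are
distinct, the two sets have size `b`, and the output function depends only on the
answer bits in `S0` resp. `S1`. -/
def DecTuple.Valid {m ℓ : ℕ} (b : ℕ) (ω : DecTuple m ℓ) : Prop :=
  ω.j0 ≠ ω.j1 ∧ ω.S0.card = b ∧ ω.S1.card = b ∧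
    ∀ a0 a1 a0' a1' : Fin ℓ → Bool,
      (∀ k ∈ ω.S0, a0 k = a0' k) → (∀ k ∈ ω.S1, a1 k = a1' k) →
        ω.f a0 a1 = ω.f a0' a1'

/-- `D` is a distribution over decoding tuples witnessing that `C` is a
`(2, c, ε)`-smooth code using `b` bits at index `i`. -/
def IsSmoothDecoder {n m ℓ : ℕ} (b : ℕ) (c ε : ℝ)
    (C : (Fin n → Bool) → Fin m → Fin ℓ → Bool) (i : Fin n)
    (D : DecTuple m ℓ → ℝ) : Prop :=
  (∀ ω, 0 ≤ D ω) ∧ (∑ ω, D ω = 1) ∧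
  (∀ ω, D ω ≠ 0 → ω.Valid b) ∧
  (∀ x, 1 / 2 + ε ≤
    ∑ ω ∈ Finset.univ.filter
      (fun ω : DecTuple m ℓ => ω.f (C x ω.j0) (C x ω.j1) = x i), D ω) ∧
  (∀ j : Fin m,
    ∑ ω ∈ Finset.univ.filter
      (fun ω : DecTuple m ℓ => ω.j0 = j ∨ ω.j1 = j), D ω ≤ c / m)

/-- `C : {0,1}^n → ({0,1}^ℓ)^m` is a `(2, c, ε)`-smooth code using `b` bits. -/
def IsSmoothCode (n m ℓ b : ℕ) (c ε : ℝ)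
    (C : (Fin n → Bool) → Fin m → Fin ℓ → Bool) : Prop :=
  ∀ i : Fin n, ∃ D : DecTuple m ℓ → ℝ, IsSmoothDecoder b c ε C i D

/-!
Fix a reference index `i₀` and let `p₁`, `p₂` be the distributions of its two queries. The code
lists the answer of server `s` to every query `u`, repeated `k_s(u) ≈ 2^(t+1) p_s(u)` times (at
least once), so `m ≤ 6·2^t`, and query `u` may be read with probability up to
`c_s(u) = 3 k_s(u) / m ≥ p_s(u)` while each of its copies is read with probability at most `3/m`.

For another index `i`, the query distributions are `η`-close to `p₁`, `p₂`, so scaling down the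
user's randomness, by a factor that depends only on the queries it produces, until the caps `c_s`
are respected loses mass `ρ ≤ 2η`. That mass is given to rules that ignore the answers and output
a uniform random bit, spread over the room left below the caps (at least `ρ`, as each `c_s` has
total mass at least one); they succeed with probability `1/2`, so the recovery probability drops
by at most `ρ/2 ≤ η`. Reading a uniformly random copy of each query then spreads the load of a
query evenly over its copies.
-/

open Finset

section Pushforward

variable {α β : Type*} [Fintype α] [DecidableEq β]

def pushforward (f : α → β) (w : α → ℝ) (y : β) : ℝ :=
  ∑ a ∈ univ.filter (fun a => f a = y), w a

theorem pushforward_eq_sum_ite (f : α → β) (w : α → ℝ) (y : β) :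
    pushforward f w y = ∑ a, if f a = y then w a else 0 :=
  sum_filter _ _

theorem sum_filter_pushforward [Fintype β] (f : α → β) (w : α → ℝ) (p : β → Prop)
    [DecidablePred p] :
    ∑ y ∈ univ.filter p, pushforward f w y = ∑ a ∈ univ.filter (fun a => p (f a)), w a := by
  unfold pushforward
  rw [sum_fiberwise_eq_sum_filter]
  simp only [mem_filter, mem_univ, true_and]

theorem sum_pushforward [Fintype β] (f : α → β) (w : α → ℝ) :
    ∑ y, pushforward f w y = ∑ a, w a :=
  sum_fiberwise univ f w

theorem pushforward_nonneg {f : α → β} {w : α → ℝ} (hw : ∀ a, 0 ≤ w a) (y : β) :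
    0 ≤ pushforward f w y :=
  sum_nonneg fun a _ => hw a

theorem pushforward_mono (f : α → β) {v w : α → ℝ} (hvw : ∀ a, v a ≤ w a) (y : β) :
    pushforward f v y ≤ pushforward f w y :=
  sum_le_sum fun a _ => hvw a

theorem pushforward_mul_comp (f : α → β) (w : α → ℝ) (g : β → ℝ) (y : β) :
    pushforward f (fun a => w a * g (f a)) y = pushforward f w y * g y := by
  rw [pushforward, pushforward, sum_mul]
  exact sum_congr rfl fun a ha => by rw [(mem_filter.mp ha).2]

theorem sum_mul_comp_eq_sum_pushforward [Fintype β] (f : α → β) (w : α → ℝ) (g : β → ℝ) :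
    ∑ a, w a * g (f a) = ∑ y, pushforward f w y * g y := by
  rw [← sum_pushforward f]
  exact sum_congr rfl fun y _ => pushforward_mul_comp f w g y

theorem pushforward_sum {α' : Type*} [Fintype α'] (f : α ⊕ α' → β) (w : α ⊕ α' → ℝ) (y : β) :
    pushforward f w y =
      pushforward (f ∘ Sum.inl) (w ∘ Sum.inl) y + pushforward (f ∘ Sum.inr) (w ∘ Sum.inr) y := by
  simp only [pushforward_eq_sum_ite, Fintype.sum_sum_type, Function.comp_apply]

end Pushforward

section Thinning

theorem sum_max_sub_le_half_sum_abs_sub {Q : Type*} [Fintype Q] (π p c : Q → ℝ)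
    (hpc : ∀ u, p u ≤ c u) (hsum : ∑ u, π u = ∑ u, p u) :
    ∑ u, max (π u - c u) 0 ≤ 1 / 2 * ∑ u, |π u - p u| := by
  calc ∑ u, max (π u - c u) 0 ≤ ∑ u, (π u - p u + |π u - p u|) / 2 :=
        sum_le_sum fun u _ => max_le (by linarith [le_abs_self (π u - p u), hpc u])
          (by linarith [neg_abs_le (π u - p u)])
    _ = 1 / 2 * ∑ u, |π u - p u| := by
        rw [← sum_div, sum_add_distrib, sum_sub_distrib, hsum]; ring

theorem sub_min_eq_max_sub_zero (p c : ℝ) : p - min p c = max (p - c) 0 := by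
  rcases le_total p c with h | h
  · rw [min_eq_left h, max_eq_right (by linarith)]; ring
  · rw [min_eq_right h, max_eq_left (by linarith)]

variable {R Q₁ Q₂ : Type*} [Fintype R] [Fintype Q₁] [DecidableEq Q₁] [Fintype Q₂]
  [DecidableEq Q₂]

theorem exists_thinning (q : R → Q₁) {v : R → ℝ} (hv : ∀ r, 0 ≤ v r) {c : Q₁ → ℝ}
    (hc : ∀ u, 0 ≤ c u) :
    ∃ w : R → ℝ, (∀ r, 0 ≤ w r ∧ w r ≤ v r) ∧ (∀ u, pushforward q w u ≤ c u) ∧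
      ∑ r, (v r - w r) = ∑ u, max (pushforward q v u - c u) 0 := by
  set π := pushforward q v
  set g : Q₁ → ℝ := fun u => if π u ≤ c u then 1 else c u / π u
  have hg : ∀ u, 0 ≤ g u ∧ g u ≤ 1 := fun u => by
    by_cases h : π u ≤ c u
    · simp [g, h]
    · have hπ : 0 < π u := (hc u).trans_lt (not_le.mp h)
      simp only [g, if_neg h]
      exact ⟨div_nonneg (hc u) hπ.le, (div_le_one hπ).mpr (not_le.mp h).le⟩
  have hπg : ∀ u, π u * g u = min (π u) (c u) := fun u => by
    by_cases h : π u ≤ c u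
    · simp [g, h]
    · have hπ : 0 < π u := (hc u).trans_lt (not_le.mp h)
      simp only [g, if_neg h, mul_div_cancel₀ _ hπ.ne', min_eq_right (not_le.mp h).le]
  refine ⟨fun r => v r * g (q r),
    fun r => ⟨mul_nonneg (hv r) (hg _).1, mul_le_of_le_one_right (hv r) (hg _).2⟩,
    fun u => ?_, ?_⟩
  · rw [pushforward_mul_comp, hπg]
    exact min_le_right _ _
  · calc ∑ r, (v r - v r * g (q r)) = ∑ r, v r * (1 - g (q r)) :=
          sum_congr rfl fun r _ => by ring
      _ = ∑ u, π u * (1 - g u) := sum_mul_comp_eq_sum_pushforward q v (fun u => 1 - g u)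
      _ = ∑ u, max (π u - c u) 0 :=
          sum_congr rfl fun u _ => by rw [mul_sub, mul_one, hπg, sub_min_eq_max_sub_zero]

theorem exists_thinning₂ (q₁ : R → Q₁) (q₂ : R → Q₂) {v : R → ℝ} (hv : ∀ r, 0 ≤ v r)
    {c₁ : Q₁ → ℝ} {c₂ : Q₂ → ℝ} (hc₁ : ∀ u, 0 ≤ c₁ u) (hc₂ : ∀ u, 0 ≤ c₂ u) :
    ∃ w : R → ℝ, (∀ r, 0 ≤ w r ∧ w r ≤ v r) ∧ (∀ u, pushforward q₁ w u ≤ c₁ u) ∧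
      (∀ u, pushforward q₂ w u ≤ c₂ u) ∧
      ∑ r, (v r - w r) ≤
        ∑ u, max (pushforward q₁ v u - c₁ u) 0 + ∑ u, max (pushforward q₂ v u - c₂ u) 0 := by
  obtain ⟨w₁, hw₁, hload₁, hloss₁⟩ := exists_thinning q₁ hv hc₁
  obtain ⟨w₂, hw₂, hload₂, hloss₂⟩ := exists_thinning q₂ (fun r => (hw₁ r).1) hc₂
  refine ⟨w₂, fun r => ⟨(hw₂ r).1, (hw₂ r).2.trans (hw₁ r).2⟩,
    fun u => (pushforward_mono q₁ (fun r => (hw₂ r).2) u).trans (hload₁ u), hload₂, ?_⟩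
  have hmono : ∑ u, max (pushforward q₂ w₁ u - c₂ u) 0 ≤
      ∑ u, max (pushforward q₂ v u - c₂ u) 0 :=
    sum_le_sum fun u _ => max_le_max_right 0 <| sub_le_sub_right
      (pushforward_mono q₂ (fun r => (hw₁ r).2) u) _
  calc ∑ r, (v r - w₂ r) = ∑ r, (v r - w₁ r) + ∑ r, (w₁ r - w₂ r) := by
        rw [← sum_add_distrib]; exact sum_congr rfl fun r _ => by ring
    _ ≤ _ := by rw [hloss₁, hloss₂]; exact add_le_add le_rfl hmono

end Thinning

section Noise

theorem exists_sum_eq_one_mul_le {Q : Type*} [Fintype Q] [Nonempty Q] {a : Q → ℝ}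
    (ha : ∀ u, 0 ≤ a u) {ρ : ℝ} (hρ : 0 ≤ ρ) (hρa : ρ ≤ ∑ u, a u) :
    ∃ ν : Q → ℝ, (∀ u, 0 ≤ ν u) ∧ ∑ u, ν u = 1 ∧ ∀ u, ρ * ν u ≤ a u := by
  rcases (sum_nonneg fun u _ => ha u).eq_or_lt with hA | hA
  · refine ⟨fun _ => (Fintype.card Q : ℝ)⁻¹, fun _ => by positivity, by simp, fun u => ?_⟩
    rw [le_antisymm (hρa.trans_eq hA.symm) hρ, zero_mul]
    exact ha u
  · refine ⟨fun u => a u / ∑ v, a v, fun u => div_nonneg (ha u) hA.le,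
      by rw [← sum_div, div_self hA.ne'], fun u => ?_⟩
    rw [mul_div_left_comm]
    exact mul_le_of_le_one_right (ha u) ((div_le_one hA).mpr hρa)

variable {Q₁ Q₂ : Type*} [Fintype Q₁] [Fintype Q₂]

noncomputable def noiseWeight (ρ : ℝ) (ν₁ : Q₁ → ℝ) (ν₂ : Q₂ → ℝ) (a : Q₁ × Q₂ × Bool) : ℝ :=
  ρ / 2 * ν₁ a.1 * ν₂ a.2.1

variable {ν₁ : Q₁ → ℝ} {ν₂ : Q₂ → ℝ}

theorem sum_noiseWeight (ρ : ℝ) (h₁ : ∑ u, ν₁ u = 1) (h₂ : ∑ u, ν₂ u = 1) :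
    ∑ a, noiseWeight ρ ν₁ ν₂ a = ρ := by
  calc ∑ a, noiseWeight ρ ν₁ ν₂ a = ∑ u₁, ∑ u₂, ρ * ν₁ u₁ * ν₂ u₂ := by
        simp only [Fintype.sum_prod_type, Fintype.sum_bool, noiseWeight]
        exact sum_congr rfl fun _ _ => sum_congr rfl fun _ _ => by ring
    _ = ρ := by simp only [← mul_sum, h₂, mul_one, h₁]

theorem pushforward_bit_noiseWeight (ρ : ℝ) (h₁ : ∑ u, ν₁ u = 1) (h₂ : ∑ u, ν₂ u = 1)
    (β : Bool) :
    pushforward (fun a : Q₁ × Q₂ × Bool => a.2.2) (noiseWeight ρ ν₁ ν₂) β = ρ / 2 := by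
  calc pushforward (fun a : Q₁ × Q₂ × Bool => a.2.2) (noiseWeight ρ ν₁ ν₂) β
      = ∑ u₁, ∑ u₂, ρ / 2 * ν₁ u₁ * ν₂ u₂ := by
        simp only [pushforward_eq_sum_ite, Fintype.sum_prod_type, sum_ite_eq', mem_univ, if_true,
          noiseWeight]
    _ = ρ / 2 := by simp only [← mul_sum, h₂, mul_one, h₁]

theorem pushforward_fst_noiseWeight [DecidableEq Q₁] (ρ : ℝ) (h₂ : ∑ u, ν₂ u = 1) (u : Q₁) :
    pushforward (fun a : Q₁ × Q₂ × Bool => a.1) (noiseWeight ρ ν₁ ν₂) u = ρ * ν₁ u := by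
  calc pushforward (fun a : Q₁ × Q₂ × Bool => a.1) (noiseWeight ρ ν₁ ν₂) u
      = ∑ u₂, ∑ _β : Bool, ρ / 2 * ν₁ u * ν₂ u₂ := by
        simp only [pushforward_eq_sum_ite, Fintype.sum_prod_type, sum_ite_irrel, sum_const_zero,
          sum_ite_eq', mem_univ, if_true, noiseWeight]
    _ = ρ * ν₁ u := by
        simp only [Fintype.sum_bool, ← two_mul, ← mul_sum, h₂]
        ring

theorem pushforward_snd_noiseWeight [DecidableEq Q₂] (ρ : ℝ) (h₁ : ∑ u, ν₁ u = 1) (u : Q₂) :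
    pushforward (fun a : Q₁ × Q₂ × Bool => a.2.1) (noiseWeight ρ ν₁ ν₂) u = ρ * ν₂ u := by
  calc pushforward (fun a : Q₁ × Q₂ × Bool => a.2.1) (noiseWeight ρ ν₁ ν₂) u
      = ∑ u₁, ∑ _β : Bool, ρ / 2 * ν₁ u₁ * ν₂ u := by
        simp only [pushforward_eq_sum_ite, Fintype.sum_prod_type, sum_ite_irrel, sum_const_zero,
          sum_ite_eq', mem_univ, if_true, noiseWeight]
    _ = ρ * ν₂ u := by
        simp only [Fintype.sum_bool, ← two_mul, ← mul_sum, ← sum_mul, h₁]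
        ring

end Noise

section Copies

variable {Q : Type*} [DecidableEq Q]

abbrev Copies (k : Q → ℕ) := Σ u, Fin (k u)

noncomputable def copyWeight (k : Q → ℕ) (u : Q) (σ : Copies k) : ℝ :=
  if σ.1 = u then (k u : ℝ)⁻¹ else 0

theorem copyWeight_nonneg (k : Q → ℕ) (u : Q) (σ : Copies k) : 0 ≤ copyWeight k u σ := by
  unfold copyWeight; split_ifs <;> positivity

theorem sum_copyWeight [Fintype Q] {k : Q → ℕ} (hk : ∀ u, 0 < k u) (u : Q) :
    ∑ σ, copyWeight k u σ = 1 := by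
  rw [Fintype.sum_sigma, sum_eq_single u (fun v _ hv => by simp [copyWeight, hv]) (by simp)]
  simp [copyWeight, (hk u).ne']

theorem sum_mul_copyWeight {α : Type*} [Fintype α] (k : Q → ℕ) (g : α → Q) (W : α → ℝ)
    (σ : Copies k) :
    ∑ a, W a * copyWeight k (g a) σ = pushforward g W σ.1 / k σ.1 := by
  rw [pushforward_eq_sum_ite, sum_div]
  refine sum_congr rfl fun a _ => ?_
  unfold copyWeight
  split_ifs with h₁ h₂ h₂
  · rw [h₁, div_eq_mul_inv]
  · exact absurd h₁.symm h₂
  · exact absurd h₂.symm h₁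
  · simp

variable {α Q₁ Q₂ : Type*} [Fintype α] [Fintype Q₁] [Fintype Q₂] [DecidableEq Q₁]
  [DecidableEq Q₂] {k₁ : Q₁ → ℕ} {k₂ : Q₂ → ℕ} (g₁ : α → Q₁) (g₂ : α → Q₂) (W : α → ℝ)

theorem sum_mul_copyWeight_mul_copyWeight (hk₁ : ∀ u, 0 < k₁ u) (hk₂ : ∀ u, 0 < k₂ u) :
    ∑ p : α × Copies k₁ × Copies k₂,
      W p.1 * copyWeight k₁ (g₁ p.1) p.2.1 * copyWeight k₂ (g₂ p.1) p.2.2 = ∑ a, W a := by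
  simp only [Fintype.sum_prod_type, mul_assoc, ← mul_sum, sum_copyWeight hk₂, mul_one,
    sum_copyWeight hk₁]

theorem sum_filter_fst_mul_copyWeight_mul_copyWeight (hk₂ : ∀ u, 0 < k₂ u) (τ : Copies k₁) :
    ∑ p ∈ univ.filter (fun p : α × Copies k₁ × Copies k₂ => p.2.1 = τ),
      W p.1 * copyWeight k₁ (g₁ p.1) p.2.1 * copyWeight k₂ (g₂ p.1) p.2.2 =
      pushforward g₁ W τ.1 / k₁ τ.1 := by
  rw [← sum_mul_copyWeight, sum_filter, Fintype.sum_prod_type]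
  refine sum_congr rfl fun a _ => ?_
  simp only [Fintype.sum_prod_type, sum_ite_irrel, sum_const_zero, sum_ite_eq', mem_univ, if_true,
    ← mul_sum, sum_copyWeight hk₂, mul_one]

theorem sum_filter_snd_mul_copyWeight_mul_copyWeight (hk₁ : ∀ u, 0 < k₁ u) (τ : Copies k₂) :
    ∑ p ∈ univ.filter (fun p : α × Copies k₁ × Copies k₂ => p.2.2 = τ),
      W p.1 * copyWeight k₁ (g₁ p.1) p.2.1 * copyWeight k₂ (g₂ p.1) p.2.2 =
      pushforward g₂ W τ.1 / k₂ τ.1 := by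
  rw [← sum_mul_copyWeight, sum_filter, Fintype.sum_prod_type]
  refine sum_congr rfl fun a _ => ?_
  simp only [Fintype.sum_prod_type, sum_ite_eq', mem_univ, if_true, ← sum_mul, ← mul_sum,
    sum_copyWeight hk₁, mul_one]

end Copies

section CopyCount

variable {Q : Type*} [Fintype Q] {p : Q → ℝ}

noncomputable def copyCount (p : Q → ℝ) (u : Q) : ℕ :=
  max 1 ⌈2 * (Fintype.card Q : ℝ) * p u⌉₊

theorem copyCount_pos (p : Q → ℝ) (u : Q) : 0 < copyCount p u :=
  Nat.lt_of_lt_of_le one_pos (le_max_left _ _)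

theorem le_copyCount (p : Q → ℝ) (u : Q) : 2 * Fintype.card Q * p u ≤ copyCount p u :=
  (Nat.le_ceil _).trans (Nat.cast_le.mpr (le_max_right _ _))

theorem copyCount_le {u : Q} (hp : 0 ≤ p u) :
    (copyCount p u : ℝ) ≤ 2 * Fintype.card Q * p u + 1 := by
  rw [copyCount, Nat.cast_max, Nat.cast_one]
  exact max_le (by linarith [mul_nonneg (by positivity : (0 : ℝ) ≤ 2 * Fintype.card Q) hp])
    (Nat.ceil_lt_add_one (by positivity)).le

theorem le_sum_copyCount (hp1 : ∑ u, p u = 1) :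
    2 * Fintype.card Q ≤ ∑ u, (copyCount p u : ℝ) := by
  calc (2 * Fintype.card Q : ℝ) = ∑ u, 2 * Fintype.card Q * p u := by rw [← mul_sum, hp1, mul_one]
    _ ≤ _ := sum_le_sum fun u _ => le_copyCount p u

theorem sum_copyCount_le (hp : ∀ u, 0 ≤ p u) (hp1 : ∑ u, p u = 1) :
    ∑ u, (copyCount p u : ℝ) ≤ 3 * Fintype.card Q := by
  calc ∑ u, (copyCount p u : ℝ) ≤ ∑ u, (2 * Fintype.card Q * p u + 1) :=
        sum_le_sum fun u _ => copyCount_le (hp u)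
    _ = 3 * Fintype.card Q := by
        rw [sum_add_distrib, ← mul_sum, hp1, sum_const, card_univ, nsmul_eq_mul]; ring

variable {m : ℝ} (hm0 : 0 < m) (hm : m ≤ 6 * Fintype.card Q)
include hm0 hm

theorem le_three_mul_copyCount_div {u : Q} (hp : 0 ≤ p u) : p u ≤ 3 * copyCount p u / m := by
  rw [le_div_iff₀ hm0]
  nlinarith [le_copyCount p u]

theorem one_le_sum_three_mul_copyCount_div (hp1 : ∑ u, p u = 1) :
    1 ≤ ∑ u, 3 * (copyCount p u : ℝ) / m := by
  rw [← sum_div, ← mul_sum, le_div_iff₀ hm0]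
  linarith [le_sum_copyCount hp1]

end CopyCount

/-- A decoding tuple whose two positions are replaced by a query `u₁` to the first server and a
query `u₂` to the second. -/
structure QueryRule (Q₁ Q₂ : Type*) (ℓ : ℕ) where
  u₁ : Q₁
  u₂ : Q₂
  S₀ : Finset (Fin ℓ)
  S₁ : Finset (Fin ℓ)
  f : (Fin ℓ → Bool) → (Fin ℓ → Bool) → Bool

namespace QueryRule

variable {Q₁ Q₂ : Type*} {ℓ : ℕ}

def UsesBits (b : ℕ) (ρ : QueryRule Q₁ Q₂ ℓ) : Prop :=
  ρ.S₀.card = b ∧ ρ.S₁.card = b ∧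
    ∀ a0 a1 a0' a1' : Fin ℓ → Bool,
      (∀ k ∈ ρ.S₀, a0 k = a0' k) → (∀ k ∈ ρ.S₁, a1 k = a1' k) → ρ.f a0 a1 = ρ.f a0' a1'

def decode (ρ : QueryRule Q₁ Q₂ ℓ) (A₁ : Q₁ → Fin ℓ → Bool) (A₂ : Q₂ → Fin ℓ → Bool) : Bool :=
  ρ.f (A₁ ρ.u₁) (A₂ ρ.u₂)

def toDecTuple {m : ℕ} (ρ : QueryRule Q₁ Q₂ ℓ) (j₀ j₁ : Fin m) : DecTuple m ℓ :=
  ⟨j₀, j₁, ρ.S₀, ρ.S₁, ρ.f⟩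

theorem UsesBits.valid_toDecTuple {m b : ℕ} {ρ : QueryRule Q₁ Q₂ ℓ} (h : ρ.UsesBits b)
    {j₀ j₁ : Fin m} (hj : j₀ ≠ j₁) : (ρ.toDecTuple j₀ j₁).Valid b :=
  ⟨hj, h⟩

def noise (T₀ T₁ : Finset (Fin ℓ)) (a : Q₁ × Q₂ × Bool) : QueryRule Q₁ Q₂ ℓ :=
  ⟨a.1, a.2.1, T₀, T₁, fun _ _ => a.2.2⟩

end QueryRule

section QueryDecoder

variable {n m ℓ b : ℕ} {α Q₁ Q₂ : Type*} [Fintype α] [Fintype Q₁] [Fintype Q₂]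
  [DecidableEq Q₁] [DecidableEq Q₂]

def IsQueryDecoder (b : ℕ) (c₁ : Q₁ → ℝ) (c₂ : Q₂ → ℝ) (ε : ℝ)
    (A₁ : (Fin n → Bool) → Q₁ → Fin ℓ → Bool) (A₂ : (Fin n → Bool) → Q₂ → Fin ℓ → Bool)
    (i : Fin n) (W : α → ℝ) (rule : α → QueryRule Q₁ Q₂ ℓ) : Prop :=
  (∀ a, 0 ≤ W a) ∧ (∑ a, W a = 1) ∧ (∀ a, (rule a).UsesBits b) ∧
  (∀ x, 1 / 2 + ε ≤ pushforward (fun a => (rule a).decode (A₁ x) (A₂ x)) W (x i)) ∧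
  (∀ u, pushforward (fun a => (rule a).u₁) W u ≤ c₁ u) ∧
  (∀ u, pushforward (fun a => (rule a).u₂) W u ≤ c₂ u)

theorem exists_isQueryDecoder_add_noise {R : Type*} [Fintype R] [Nonempty Q₁] [Nonempty Q₂]
    {c₁ : Q₁ → ℝ} {c₂ : Q₂ → ℝ} {ε : ℝ} {A₁ : (Fin n → Bool) → Q₁ → Fin ℓ → Bool}
    {A₂ : (Fin n → Bool) → Q₂ → Fin ℓ → Bool} {i : Fin n} {w : R → ℝ}
    {rule : R → QueryRule Q₁ Q₂ ℓ} {T₀ T₁ : Finset (Fin ℓ)} (hT₀ : T₀.card = b)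
    (hT₁ : T₁.card = b) (hw : ∀ r, 0 ≤ w r) (hw1 : ∑ r, w r ≤ 1)
    (hrule : ∀ r, (rule r).UsesBits b)
    (hcorrect : ∀ x, 1 / 2 + ε ≤
      pushforward (fun r => (rule r).decode (A₁ x) (A₂ x)) w (x i) + (1 - ∑ r, w r) / 2)
    (hload₁ : ∀ u, pushforward (fun r => (rule r).u₁) w u ≤ c₁ u)
    (hload₂ : ∀ u, pushforward (fun r => (rule r).u₂) w u ≤ c₂ u)
    (hc₁ : 1 ≤ ∑ u, c₁ u) (hc₂ : 1 ≤ ∑ u, c₂ u) :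
    ∃ (W : R ⊕ (Q₁ × Q₂ × Bool) → ℝ) (rule' : R ⊕ (Q₁ × Q₂ × Bool) → QueryRule Q₁ Q₂ ℓ),
      IsQueryDecoder b c₁ c₂ ε A₁ A₂ i W rule' := by
  set ρ := 1 - ∑ r, w r
  have hρ : 0 ≤ ρ := sub_nonneg.mpr hw1
  obtain ⟨ν₁, hν₁, hν₁1, hρν₁⟩ := exists_sum_eq_one_mul_le (fun u => sub_nonneg.mpr (hload₁ u)) hρ
    (by rw [sum_sub_distrib, sum_pushforward]; linarith)
  obtain ⟨ν₂, hν₂, hν₂1, hρν₂⟩ := exists_sum_eq_one_mul_le (fun u => sub_nonneg.mpr (hload₂ u)) hρ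
    (by rw [sum_sub_distrib, sum_pushforward]; linarith)
  refine ⟨Sum.elim w (noiseWeight ρ ν₁ ν₂), Sum.elim rule (QueryRule.noise T₀ T₁),
    ?_, ?_, ?_, fun x => ?_, fun u => ?_, fun u => ?_⟩
  · rintro (r | a)
    · exact hw r
    · have := hν₁ a.1; have := hν₂ a.2.1
      simp only [Sum.elim_inr, noiseWeight]; positivity
  · rw [Fintype.sum_sum_type]
    simp only [Sum.elim_inl, Sum.elim_inr, sum_noiseWeight ρ hν₁1 hν₂1, ρ]
    ring
  · rintro (r | a)
    · exact hrule r
    · exact ⟨hT₀, hT₁, fun _ _ _ _ _ _ => rfl⟩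
  · have := pushforward_bit_noiseWeight ρ hν₁1 hν₂1 (x i)
    rw [pushforward_sum]
    change _ ≤ pushforward (fun r => (rule r).decode (A₁ x) (A₂ x)) w (x i) +
      pushforward (fun a => a.2.2) (noiseWeight ρ ν₁ ν₂) (x i)
    linarith [hcorrect x]
  · have := pushforward_fst_noiseWeight (ν₁ := ν₁) ρ hν₂1 u
    rw [pushforward_sum]
    change pushforward (fun r => (rule r).u₁) w u +
      pushforward (fun a => a.1) (noiseWeight ρ ν₁ ν₂) u ≤ c₁ u
    linarith [hρν₁ u]
  · have := pushforward_snd_noiseWeight (ν₂ := ν₂) ρ hν₁1 u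
    rw [pushforward_sum]
    change pushforward (fun r => (rule r).u₂) w u +
      pushforward (fun a => a.2.1) (noiseWeight ρ ν₁ ν₂) u ≤ c₂ u
    linarith [hρν₂ u]

variable {k₁ : Q₁ → ℕ} {k₂ : Q₂ → ℕ}

def copyCode (e : Copies k₁ ⊕ Copies k₂ ≃ Fin m)
    (A₁ : (Fin n → Bool) → Q₁ → Fin ℓ → Bool) (A₂ : (Fin n → Bool) → Q₂ → Fin ℓ → Bool)
    (x : Fin n → Bool) (j : Fin m) : Fin ℓ → Bool :=
  Sum.elim (fun σ => A₁ x σ.1) (fun σ => A₂ x σ.1) (e.symm j)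

/-- Draw a rule, then a uniformly random copy of each of its two queries. -/
noncomputable def liftDecoder (e : Copies k₁ ⊕ Copies k₂ ≃ Fin m) (W : α → ℝ)
    (rule : α → QueryRule Q₁ Q₂ ℓ) : DecTuple m ℓ → ℝ :=
  pushforward
    (fun p : α × Copies k₁ × Copies k₂ =>
      (rule p.1).toDecTuple (e (.inl p.2.1)) (e (.inr p.2.2)))
    (fun p => W p.1 * copyWeight k₁ (rule p.1).u₁ p.2.1 * copyWeight k₂ (rule p.1).u₂ p.2.2)

variable (hk₁ : ∀ u, 0 < k₁ u) (hk₂ : ∀ u, 0 < k₂ u) (e : Copies k₁ ⊕ Copies k₂ ≃ Fin m)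
  (W : α → ℝ) (rule : α → QueryRule Q₁ Q₂ ℓ)
include hk₁ hk₂

theorem sum_filter_decode_liftDecoder (A₁ : (Fin n → Bool) → Q₁ → Fin ℓ → Bool)
    (A₂ : (Fin n → Bool) → Q₂ → Fin ℓ → Bool) (x : Fin n → Bool) (β : Bool) :
    ∑ ω ∈ univ.filter
      (fun ω : DecTuple m ℓ => ω.f (copyCode e A₁ A₂ x ω.j0) (copyCode e A₁ A₂ x ω.j1) = β),
      liftDecoder e W rule ω = pushforward (fun a => (rule a).decode (A₁ x) (A₂ x)) W β := by
  rw [liftDecoder, sum_filter_pushforward, pushforward_eq_sum_ite,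
    ← sum_mul_copyWeight_mul_copyWeight (fun a => (rule a).u₁) (fun a => (rule a).u₂) _ hk₁ hk₂,
    sum_filter]
  refine sum_congr rfl fun p _ => ?_
  by_cases hp : p.2.1.1 = (rule p.1).u₁ ∧ p.2.2.1 = (rule p.1).u₂
  · simp only [copyCode, QueryRule.toDecTuple, QueryRule.decode, Equiv.symm_apply_apply,
      Sum.elim_inl, Sum.elim_inr, hp.1, hp.2]
    by_cases hd : (rule p.1).f (A₁ x (rule p.1).u₁) (A₂ x (rule p.1).u₂) = β <;> simp [hd]
  · rcases not_and_or.mp hp with hp | hp <;> simp [copyWeight, hp]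

theorem liftDecoder_load_le {c : ℝ}
    (hload₁ : ∀ u, pushforward (fun a => (rule a).u₁) W u ≤ c * k₁ u / m)
    (hload₂ : ∀ u, pushforward (fun a => (rule a).u₂) W u ≤ c * k₂ u / m) (j : Fin m) :
    ∑ ω ∈ univ.filter (fun ω : DecTuple m ℓ => ω.j0 = j ∨ ω.j1 = j), liftDecoder e W rule ω ≤
      c / m := by
  have hdiv : ∀ {L : ℝ} {k : ℕ}, 0 < k → L ≤ c * k / m → L / k ≤ c / m := fun hk h => by
    rw [div_le_iff₀ (by exact_mod_cast hk)]
    exact h.trans_eq (by ring)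
  rw [liftDecoder, sum_filter_pushforward]
  rcases hj : e.symm j with τ | τ
  · rw [filter_congr (q := fun p : α × Copies k₁ × Copies k₂ => p.2.1 = τ) fun p _ => by
        simp [QueryRule.toDecTuple, ← Equiv.eq_symm_apply, hj],
      sum_filter_fst_mul_copyWeight_mul_copyWeight (fun a => (rule a).u₁) (fun a => (rule a).u₂) W
        hk₂]
    exact hdiv (hk₁ τ.1) (hload₁ τ.1)
  · rw [filter_congr (q := fun p : α × Copies k₁ × Copies k₂ => p.2.2 = τ) fun p _ => by
        simp [QueryRule.toDecTuple, ← Equiv.eq_symm_apply, hj],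
      sum_filter_snd_mul_copyWeight_mul_copyWeight (fun a => (rule a).u₁) (fun a => (rule a).u₂) W
        hk₁]
    exact hdiv (hk₂ τ.1) (hload₂ τ.1)

theorem IsQueryDecoder.isSmoothDecoder_liftDecoder {c ε : ℝ}
    {A₁ : (Fin n → Bool) → Q₁ → Fin ℓ → Bool} {A₂ : (Fin n → Bool) → Q₂ → Fin ℓ → Bool}
    {i : Fin n} {W : α → ℝ} {rule : α → QueryRule Q₁ Q₂ ℓ}
    (h : IsQueryDecoder b (fun u => c * k₁ u / m) (fun u => c * k₂ u / m) ε A₁ A₂ i W rule) :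
    IsSmoothDecoder b c ε (copyCode e A₁ A₂) i (liftDecoder e W rule) := by
  obtain ⟨hW, hW1, hrule, hcorrect, hload₁, hload₂⟩ := h
  refine ⟨pushforward_nonneg fun p => ?_, ?_, fun ω hω => ?_, fun x => ?_,
    liftDecoder_load_le hk₁ hk₂ e W rule hload₁ hload₂⟩
  · have := hW p.1
    have := copyWeight_nonneg k₁ (rule p.1).u₁ p.2.1
    have := copyWeight_nonneg k₂ (rule p.1).u₂ p.2.2
    positivity
  · rw [liftDecoder, sum_pushforward,
      sum_mul_copyWeight_mul_copyWeight (fun a => (rule a).u₁) (fun a => (rule a).u₂) _ hk₁ hk₂,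
      hW1]
  · obtain ⟨p, hp, -⟩ := exists_ne_zero_of_sum_ne_zero hω
    rw [← (mem_filter.mp hp).2]
    exact (hrule p.1).valid_toDecTuple (e.injective.ne Sum.inl_ne_inr)
  · exact (hcorrect x).trans_eq (sum_filter_decode_liftDecoder hk₁ hk₂ e W rule A₁ A₂ x _).symm

end QueryDecoder

namespace PIRScheme

variable {n t ℓ b : ℕ} (P : PIRScheme n t ℓ)

def queryRule (i : Fin n) (S₀ S₁ : Fin P.R → Finset (Fin ℓ)) (r : Fin P.R) :
    QueryRule (Fin t → Bool) (Fin t → Bool) ℓ :=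
  ⟨P.q1 i r, P.q2 i r, S₀ r, S₁ r, P.out i r⟩

theorem exists_isQueryDecoder {η ε : ℝ} (hP : P.ProbDist) (hcor : P.Correct ε)
    (hb : P.UsesBits b) (i : Fin n) {c₁ c₂ : (Fin t → Bool) → ℝ} (hc₁ : ∀ u, 0 ≤ c₁ u)
    (hc₂ : ∀ u, 0 ≤ c₂ u) (hc₁1 : 1 ≤ ∑ u, c₁ u) (hc₂1 : 1 ≤ ∑ u, c₂ u)
    (hexcess : ∑ u, max (pushforward (P.q1 i) P.pr u - c₁ u) 0 +
      ∑ u, max (pushforward (P.q2 i) P.pr u - c₂ u) 0 ≤ 2 * η) :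
    ∃ (W : Fin P.R ⊕ ((Fin t → Bool) × (Fin t → Bool) × Bool) → ℝ)
      (rule : Fin P.R ⊕ ((Fin t → Bool) × (Fin t → Bool) × Bool) →
        QueryRule (Fin t → Bool) (Fin t → Bool) ℓ),
      IsQueryDecoder b c₁ c₂ (ε - η) P.ans1 P.ans2 i W rule := by
  obtain ⟨hpr, hpr1⟩ := hP
  obtain ⟨w, hw, hload₁, hload₂, hloss⟩ := exists_thinning₂ (P.q1 i) (P.q2 i) hpr hc₁ hc₂
  choose S₀ S₁ hS₀ hS₁ hout using hb i
  obtain ⟨r₀⟩ : Nonempty (Fin P.R) := by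
    by_contra h
    simp [not_nonempty_iff.mp h] at hpr1
  have hlost : ∑ r, (P.pr r - w r) = 1 - ∑ r, w r := by rw [sum_sub_distrib, hpr1]
  refine exists_isQueryDecoder_add_noise (rule := P.queryRule i S₀ S₁) (hS₀ r₀) (hS₁ r₀)
    (fun r => (hw r).1) ?_ (fun r => ⟨hS₀ r, hS₁ r, hout r⟩) (fun x => ?_) hload₁ hload₂ hc₁1 hc₂1
  · linarith [sum_nonneg fun r (_ : r ∈ univ) => sub_nonneg.mpr (hw r).2]
  · have hlost_succ : ∑ r ∈ univ.filter
        (fun r => P.out i r (P.ans1 x (P.q1 i r)) (P.ans2 x (P.q2 i r)) = x i),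
        (P.pr r - w r) ≤ ∑ r, (P.pr r - w r) :=
      sum_le_sum_of_subset_of_nonneg (filter_subset _ _) fun r _ _ => sub_nonneg.mpr (hw r).2
    rw [sum_sub_distrib] at hlost_succ
    change _ ≤ ∑ r ∈ univ.filter
      (fun r => P.out i r (P.ans1 x (P.q1 i r)) (P.ans2 x (P.q2 i r)) = x i), w r + _
    linarith [hcor x i]

theorem exists_isSmoothDecoder_copyCode {m : ℕ} {η ε : ℝ} (hP : P.ProbDist)
    (hcor : P.Correct ε) (hsec : P.Secure η) (hb : P.UsesBits b) (i₀ i : Fin n)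
    {k₁ k₂ : (Fin t → Bool) → ℕ} (hk₁ : ∀ u, 0 < k₁ u) (hk₂ : ∀ u, 0 < k₂ u)
    (e : Copies k₁ ⊕ Copies k₂ ≃ Fin m)
    (hcap₁ : ∀ u, pushforward (P.q1 i₀) P.pr u ≤ 3 * k₁ u / m)
    (hcap₂ : ∀ u, pushforward (P.q2 i₀) P.pr u ≤ 3 * k₂ u / m)
    (hsum₁ : 1 ≤ ∑ u, 3 * (k₁ u : ℝ) / m) (hsum₂ : 1 ≤ ∑ u, 3 * (k₂ u : ℝ) / m) :
    ∃ D, IsSmoothDecoder b 3 (ε - η) (copyCode e P.ans1 P.ans2) i D := by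
  have hexcess : ∀ (q : Fin n → Fin P.R → Fin t → Bool) (c : (Fin t → Bool) → ℝ),
      (∀ u, pushforward (q i₀) P.pr u ≤ c u) →
      1 / 2 * ∑ u, |pushforward (q i) P.pr u - pushforward (q i₀) P.pr u| ≤ η →
      ∑ u, max (pushforward (q i) P.pr u - c u) 0 ≤ η := fun q c hc htv =>
    (sum_max_sub_le_half_sum_abs_sub _ _ c hc (by rw [sum_pushforward, sum_pushforward])).trans htv
  obtain ⟨W, rule, h⟩ := P.exists_isQueryDecoder (η := η) hP hcor hb i (fun u => by positivity)
    (fun u => by positivity) hsum₁ hsum₂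
    (by linarith [hexcess P.q1 _ hcap₁ (hsec i i₀).1, hexcess P.q2 _ hcap₂ (hsec i i₀).2])
  exact ⟨_, h.isSmoothDecoder_liftDecoder hk₁ hk₂ e⟩

end PIRScheme

/-- GKST reduction: from a one-round, `(1-η)`-secure, 2-server PIR
scheme with `n`-bit databases, `t`-bit queries, `ℓ`-bit answers, recovery probability
`1/2 + ε`, using `b` bits, one obtains a `(2, 3, ε-η)`-smooth code
`C : {0,1}^n → ({0,1}^ℓ)^m` using `b` bits, with `m ≤ 6·2^t`. -/
theorem stmt14 (n t ℓ b : ℕ) (η ε : ℝ) (P : PIRScheme n t ℓ)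
    (hP : P.ProbDist) (hcor : P.Correct ε) (hsec : P.Secure η)
    (hb : P.UsesBits b) :
    ∃ m : ℕ, m ≤ 6 * 2 ^ t ∧
      ∃ C : (Fin n → Bool) → Fin m → Fin ℓ → Bool,
        IsSmoothCode n m ℓ b 3 (ε - η) C := by
  rcases isEmpty_or_nonempty (Fin n) with hn | ⟨⟨i₀⟩⟩
  · exact ⟨0, Nat.zero_le _, fun _ j => j.elim0, isEmptyElim⟩
  have hp₁ := pushforward_nonneg (f := P.q1 i₀) hP.1
  have hp₂ := pushforward_nonneg (f := P.q2 i₀) hP.1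
  have hp₁1 : ∑ u, pushforward (P.q1 i₀) P.pr u = 1 := (sum_pushforward _ _).trans hP.2
  have hp₂1 : ∑ u, pushforward (P.q2 i₀) P.pr u = 1 := (sum_pushforward _ _).trans hP.2
  set k₁ := copyCount (pushforward (P.q1 i₀) P.pr)
  set k₂ := copyCount (pushforward (P.q2 i₀) P.pr)
  set m := Fintype.card (Copies k₁ ⊕ Copies k₂)
  have hcard : (m : ℝ) = ∑ u, (k₁ u : ℝ) + ∑ u, (k₂ u : ℝ) := by simp [m]
  have hm : (m : ℝ) ≤ 6 * Fintype.card (Fin t → Bool) := by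
    linarith [sum_copyCount_le hp₁ hp₁1, sum_copyCount_le hp₂ hp₂1]
  have hm0 : (0 : ℝ) < m := by
    have : (0 : ℝ) < Fintype.card (Fin t → Bool) := Nat.cast_pos.mpr Fintype.card_pos
    linarith [le_sum_copyCount hp₁1, le_sum_copyCount hp₂1]
  have h6 : (m : ℝ) ≤ 6 * 2 ^ t := hm.trans_eq (by simp)
  refine ⟨m, by exact_mod_cast h6, copyCode (Fintype.equivFin _) P.ans1 P.ans2,
    fun i => P.exists_isSmoothDecoder_copyCode hP hcor hsec hb i₀ i (copyCount_pos _)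
      (copyCount_pos _) _ (fun u => le_three_mul_copyCount_div hm0 hm (hp₁ u))
      (fun u => le_three_mul_copyCount_div hm0 hm (hp₂ u))
      (one_le_sum_three_mul_copyCount_div hm0 hm hp₁1)
      (one_le_sum_three_mul_copyCount_div hm0 hm hp₂1)⟩
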